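/- Let α > 0 and β₁, β₂ be real numbers with β₁ ≥ β₂ > 1. Then the Lazarević-type inequality [𝔼_{α,β₁}(z)]^{Γ(β₁−1)/Γ(β₁)} ≤ [𝔼_{α,β₂}(z)]^{Γ(β₂−1)/Γ(β₂)} holds for all real z ≥ 0, where the powers are real powers of the positive numbers 𝔼_{α,βᵢ}(z). -/

import Mathlib

/-!
Log-convexity of `Γ` makes `x ↦ Γ(x) / Γ(x + s)` antitone for every `s ≥ 0`, so each coefficient
`Γ(β) / Γ(αn + β)` of `𝔼_{α,β}` decreases in `β`, and hence so does `𝔼_{α,β}(z)` for `z ≥ 0`.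
The exponent is `Γ(β - 1) / Γ(β) = 1 / (β - 1)`, also decreasing in `β`, and `𝔼_{α,β}(z) ≥ 1`
(its constant term is `1`), so lowering `β₁` to `β₂` raises both the base and the exponent.
Convergence of the series comes from the ratio test and the log-convexity bound
`Γ(x + α) ≥ Γ(x) (x - 1)^α`.
-/

/-- The Mittag-Leffler function `E_{α,β}(z) = ∑_{n=0}^∞ z^n / Γ(α n + β)`. -/
noncomputable def mittagLeffler (α β z : ℝ) : ℝ :=
  ∑' n : ℕ, z ^ n / Real.Gamma (α * n + β)

/-- The normalized Mittag-Leffler function `𝔼_{α,β}(z) = Γ(β) E_{α,β}(z)`. -/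
noncomputable def mittagLefflerNorm (α β z : ℝ) : ℝ :=
  Real.Gamma β * mittagLeffler α β z

open Real Set Filter

theorem ConvexOn.map_add_sub_map_le {s : Set ℝ} {f : ℝ → ℝ} (hf : ConvexOn ℝ s f) {a b h : ℝ}
    (ha : a ∈ s) (hbh : b + h ∈ s) (hab : a ≤ b) (hh : 0 ≤ h) :
    f (a + h) - f a ≤ f (b + h) - f b := by
  rcases hh.eq_or_lt with rfl | hh
  · simp
  have hb : b ∈ s := hf.1.ordConnected.out ha hbh ⟨hab, by linarith⟩
  have hah : a + h ∈ s := hf.1.ordConnected.out ha hbh ⟨by linarith, by linarith⟩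
  -- slope(a, a + h) ≤ slope(a, b + h) ≤ slope(b, b + h), pivoting at `a` and then at `b + h`
  have h₁ : slope f a (a + h) ≤ slope f a (b + h) :=
    hf.slope_mono ha ⟨hah, by simpa using hh.ne'⟩ ⟨hbh, (by linarith : a < b + h).ne'⟩ (by linarith)
  have h₂ : slope f (b + h) a ≤ slope f (b + h) b :=
    hf.slope_mono hbh ⟨ha, (by linarith : a < b + h).ne⟩ ⟨hb, by simpa using hh.ne'⟩ hab
  have hslope := h₁.trans ((slope_comm f a _).trans_le (h₂.trans_eq (slope_comm f _ b)))
  simp only [slope_def_field, add_sub_cancel_left] at hslope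
  exact (div_le_div_iff_of_pos_right hh).mp hslope

namespace Real

theorem Gamma_sub_one_div_Gamma {β : ℝ} (hβ : 1 < β) : Gamma (β - 1) / Gamma β = (β - 1)⁻¹ := by
  have hβ' : 0 < β - 1 := by linarith
  have hΓ : Gamma β = (β - 1) * Gamma (β - 1) := by
    simpa using Gamma_add_one hβ'.ne'
  rw [hΓ, div_mul_eq_div_div_swap, div_self (Gamma_pos_of_pos hβ').ne', one_div]

theorem antitoneOn_Gamma_div_Gamma_add {h : ℝ} (hh : 0 ≤ h) :
    AntitoneOn (fun x => Gamma x / Gamma (x + h)) (Ioi 0) := by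
  intro a (ha : 0 < a) b (hb : 0 < b) hab
  have hlog := convexOn_log_Gamma.map_add_sub_map_le ha (show 0 < b + h by linarith) hab hh
  have hΓa := Gamma_pos_of_pos ha
  have hΓb := Gamma_pos_of_pos hb
  have hΓah := Gamma_pos_of_pos (show 0 < a + h by linarith)
  have hΓbh := Gamma_pos_of_pos (show 0 < b + h by linarith)
  simp only [Function.comp_apply] at hlog
  rw [div_le_div_iff₀ hΓbh hΓah, ← log_le_log_iff (by positivity) (by positivity),
    log_mul hΓb.ne' hΓah.ne', log_mul hΓa.ne' hΓbh.ne']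
  linarith

theorem Gamma_mul_rpow_le_Gamma_add {x a : ℝ} (hx : 1 < x) (ha : 0 < a) :
    Gamma x * (x - 1) ^ a ≤ Gamma (x + a) := by
  have hx₁ : 0 < x - 1 := by linarith
  have hΓx : 0 < Gamma x := Gamma_pos_of_pos (by linarith)
  have hstep : log (Gamma x) - log (Gamma (x - 1)) = log (x - 1) := by
    have hΓ : Gamma x = (x - 1) * Gamma (x - 1) := by
      simpa using Gamma_add_one hx₁.ne'
    rw [hΓ, log_mul hx₁.ne' (Gamma_pos_of_pos hx₁).ne', add_sub_cancel_right]
  have hslope := convexOn_log_Gamma.slope_mono_adjacent (mem_Ioi.2 hx₁)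
    (mem_Ioi.2 (by linarith : 0 < x + a)) (sub_one_lt x) (lt_add_of_pos_right x ha)
  simp only [Function.comp_apply, sub_sub_cancel, div_one, add_sub_cancel_left, hstep,
    le_div_iff₀ ha] at hslope
  rw [← log_le_log_iff (by positivity) (Gamma_pos_of_pos (by linarith)),
    log_mul hΓx.ne' (by positivity), log_rpow hx₁]
  linarith

end Real

theorem summable_pow_div_Gamma_mul_add {α : ℝ} (hα : 0 < α) (β z : ℝ) :
    Summable fun n : ℕ => z ^ n / Gamma (α * n + β) := by
  refine summable_of_ratio_norm_eventually_le (r := 1 / 2) (by norm_num) ?_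
  have hx : Tendsto (fun n : ℕ => α * n + β) atTop atTop :=
    tendsto_atTop_add_const_right _ β (tendsto_natCast_atTop_atTop.const_mul_atTop hα)
  have hgrowth : Tendsto (fun n : ℕ => (α * n + β - 1) ^ α) atTop atTop :=
    (tendsto_rpow_atTop hα).comp (tendsto_atTop_add_const_right _ (-1) hx)
  filter_upwards [hx.eventually_gt_atTop 1, hgrowth.eventually_ge_atTop (2 * |z|)]
    with n (hn : 1 < α * n + β) (hz : 2 * |z| ≤ (α * n + β - 1) ^ α)
  set x := α * n + β
  have hΓx : 0 < Gamma x := Gamma_pos_of_pos (by linarith)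
  have hpow : 0 < (x - 1) ^ α := rpow_pos_of_pos (by linarith) α
  have hsucc : α * ↑(n + 1) + β = x + α := by push_cast; ring
  rw [hsucc, norm_div, norm_div, norm_pow, norm_pow, norm_of_nonneg hΓx.le,
    norm_of_nonneg (Gamma_pos_of_pos (by linarith)).le, norm_eq_abs]
  calc |z| ^ (n + 1) / Gamma (x + α)
      ≤ |z| ^ (n + 1) / (Gamma x * (x - 1) ^ α) := by
        gcongr
        exact Gamma_mul_rpow_le_Gamma_add hn hα
    _ = |z| / (x - 1) ^ α * (|z| ^ n / Gamma x) := by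
        rw [pow_succ]; field_simp
    _ ≤ 1 / 2 * (|z| ^ n / Gamma x) := by
        gcongr ?_ * _
        rw [div_le_iff₀ hpow]; linarith

theorem one_le_mittagLefflerNorm {α β z : ℝ} (hα : 0 < α) (hβ : 0 < β) (hz : 0 ≤ z) :
    1 ≤ mittagLefflerNorm α β z := by
  have hΓ : 0 < Gamma β := Gamma_pos_of_pos hβ
  have hfirst : 1 / Gamma β ≤ mittagLeffler α β z := by
    unfold mittagLeffler
    simpa using (summable_pow_div_Gamma_mul_add hα β z).le_tsum 0 fun n _ =>
      div_nonneg (pow_nonneg hz n) (Gamma_pos_of_pos (by positivity)).le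
  rw [mittagLefflerNorm, ← div_le_iff₀' hΓ]
  simpa using hfirst

theorem antitoneOn_mittagLefflerNorm {α z : ℝ} (hα : 0 < α) (hz : 0 ≤ z) :
    AntitoneOn (fun β => mittagLefflerNorm α β z) (Ioi 0) := by
  intro β₂ (hβ₂ : 0 < β₂) β₁ (hβ₁ : 0 < β₁) hβ
  simp only [mittagLefflerNorm, mittagLeffler, ← tsum_mul_left]
  refine Summable.tsum_le_tsum (fun n => ?_) ((summable_pow_div_Gamma_mul_add hα _ z).mul_left _)
    ((summable_pow_div_Gamma_mul_add hα _ z).mul_left _)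
  have hcoeff := antitoneOn_Gamma_div_Gamma_add (h := α * n) (by positivity) hβ₂ hβ₁ hβ
  simp only [add_comm _ (α * n)] at hcoeff
  rw [mul_div_left_comm, mul_div_left_comm (Gamma β₂)]
  exact mul_le_mul_of_nonneg_left hcoeff (pow_nonneg hz n)

/-- Lazarević-type inequality for normalized Mittag-Leffler functions. -/
theorem mittagLefflerNorm_lazarevic (α β₁ β₂ : ℝ) (hα : 0 < α)
    (hβ₂ : 1 < β₂) (hβ : β₂ ≤ β₁) :
    ∀ z : ℝ, 0 ≤ z →
      (mittagLefflerNorm α β₁ z) ^ (Real.Gamma (β₁ - 1) / Real.Gamma β₁) ≤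
        (mittagLefflerNorm α β₂ z) ^ (Real.Gamma (β₂ - 1) / Real.Gamma β₂) := by
  intro z hz
  have hβ₁ : 1 < β₁ := hβ₂.trans_le hβ
  have hbase : 1 ≤ mittagLefflerNorm α β₁ z := one_le_mittagLefflerNorm hα (by linarith) hz
  have hmono : mittagLefflerNorm α β₁ z ≤ mittagLefflerNorm α β₂ z :=
    antitoneOn_mittagLefflerNorm hα hz (mem_Ioi.2 (by linarith)) (mem_Ioi.2 (by linarith)) hβ
  have hexp : (β₁ - 1)⁻¹ ≤ (β₂ - 1)⁻¹ := inv_anti₀ (by linarith) (by linarith)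
  rw [Gamma_sub_one_div_Gamma hβ₁, Gamma_sub_one_div_Gamma hβ₂]
  calc mittagLefflerNorm α β₁ z ^ (β₁ - 1)⁻¹
      ≤ mittagLefflerNorm α β₁ z ^ (β₂ - 1)⁻¹ := rpow_le_rpow_of_exponent_le hbase hexp
    _ ≤ mittagLefflerNorm α β₂ z ^ (β₂ - 1)⁻¹ :=
        rpow_le_rpow (zero_le_one.trans hbase) hmono (inv_nonneg.2 (by linarith))
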